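/- For c bounded measurable, the map F^{(c,ε)}: L^∞(ρ₁) → L^p(ρ₂), u ↦ u^{(c,ε)}, is a compact operator for every 1 ≤ p < ∞: the image of any bounded subset of L^∞(ρ₁) is precompact in L^p(ρ₂). -/

import Mathlib

open MeasureTheory Real Filter Topology

noncomputable section

/-- The entropic `(c,ε)`-transform of `u`. -/
def transform {X Y : Type*} [MeasurableSpace X] (ρ₁ : Measure X)
    (c : X → Y → ℝ) (ε : ℝ) (u : X → ℝ) : Y → ℝ :=
  fun y => -ε * Real.log (∫ x, Real.exp ((u x - c x y) / ε) ∂ρ₁)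

/-!
Since `e^{(u - c)/ε} = e^{u/ε} e^{-c/ε}`, the transform of `uₙ` at `y` is `-ε log ⟨fₙ, h_y⟩`,
where `fₙ = e^{uₙ/ε}` is bounded in `L^∞(ρ₁)` and `h_y = e^{-c(·,y)/ε} ∈ L¹(ρ₁)`. A finite
measure on a Polish space is separable, so `L¹(ρ₁)` is separable and the sequential
Banach–Alaoglu theorem gives a subsequence along which every pairing `⟨fₙ, h⟩` converges.
The pairings `⟨fₙ, h_y⟩` stay in `[e^{-D}, e^D]` with `D = (R + M)/|ε|`, so the transforms
converge pointwise and are uniformly bounded, and bounded convergence gives convergence in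
`L^p(ρ₂)`.
-/

open scoped ENNReal

theorem norm_exp_le_exp_of_abs_le {a D : ℝ} (h : |a| ≤ D) : ‖exp a‖ ≤ exp D := by
  rw [norm_of_nonneg (exp_pos a).le]
  exact exp_le_exp.2 ((le_abs_self a).trans h)

theorem abs_div_le_div_abs_of_abs_le {a b ε : ℝ} (h : |a| ≤ b) : |a / ε| ≤ b / |ε| := by
  rw [abs_div]
  exact div_le_div_of_nonneg_right h (abs_nonneg ε)

theorem abs_log_le_of_mem_Icc {t D : ℝ} (ht : t ∈ Set.Icc (exp (-D)) (exp D)) : |log t| ≤ D := by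
  have ht₀ : 0 < t := (exp_pos _).trans_le ht.1
  exact abs_le.2 ⟨(le_log_iff_exp_le ht₀).2 ht.1, (log_le_iff_le_exp ht₀).2 ht.2⟩

section Integral

variable {X : Type*} [MeasurableSpace X] {ρ : Measure X} {w : X → ℝ} {D : ℝ}

theorem integrable_exp_of_abs_le [IsFiniteMeasure ρ] (hw : AEStronglyMeasurable w ρ)
    (hD : ∀ x, |w x| ≤ D) : Integrable (fun x => exp (w x)) ρ :=
  .of_bound (continuous_exp.comp_aestronglyMeasurable hw) (exp D)
    (ae_of_all _ fun x => norm_exp_le_exp_of_abs_le (hD x))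

theorem integral_exp_mem_Icc [IsProbabilityMeasure ρ] (hw : AEStronglyMeasurable w ρ)
    (hD : ∀ x, |w x| ≤ D) : ∫ x, exp (w x) ∂ρ ∈ Set.Icc (exp (-D)) (exp D) := by
  have hint := integrable_exp_of_abs_le hw hD
  constructor
  · calc exp (-D) = ∫ _, exp (-D) ∂ρ := by simp
      _ ≤ ∫ x, exp (w x) ∂ρ :=
        integral_mono (integrable_const _) hint fun x => exp_le_exp.2 (neg_le_of_abs_le (hD x))
  · calc ∫ x, exp (w x) ∂ρ ≤ ∫ _, exp D ∂ρ :=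
        integral_mono hint (integrable_const _) fun x => exp_le_exp.2 (le_of_abs_le (hD x))
      _ = exp D := by simp

end Integral

theorem exists_subseq_tendsto_integral_mul {X : Type*} [MeasurableSpace X] {ρ : Measure X}
    [IsSeparable ρ] {f : ℕ → X → ℝ} {C : ℝ} (hf : ∀ n, AEStronglyMeasurable (f n) ρ)
    (hfC : ∀ n, ∀ᵐ x ∂ρ, ‖f n x‖ ≤ C) :
    ∃ φ : ℕ → ℕ, StrictMono φ ∧ ∀ g : X → ℝ, Integrable g ρ →
      ∃ l, Tendsto (fun n => ∫ x, f (φ n) x * g x ∂ρ) atTop (𝓝 l) := by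
  have : Fact ((1 : ℝ≥0∞) ≠ ∞) := ⟨ENNReal.one_ne_top⟩
  have := Lp.SecondCountableTopology (E := ℝ) (p := 1) (μ := ρ)
  set T := (ContinuousLinearMap.mul ℝ ℝ).lpPairing ρ ∞ 1
  have hfLp n : MemLp (f n) ∞ ρ := memLp_top_of_bound (hf n) C (hfC n)
  have hF n : ‖(hfLp n).toLp‖ ≤ max C 0 := by
    rw [Lp.norm_toLp, ← ENNReal.toReal_ofReal']
    exact ENNReal.toReal_mono ENNReal.ofReal_ne_top (eLpNormEssSup_le_of_ae_bound (hfC n))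
  obtain ⟨ℓ, -, φ, hφ, hlim⟩ := WeakDual.isSeqCompact_closedBall ℝ (Lp ℝ 1 ρ) 0 (‖T‖ * max C 0)
    (x := fun n => StrongDual.toWeakDual (T (hfLp n).toLp)) fun n => by
      simpa using (T.le_opNorm _).trans (by gcongr; exact hF n)
  refine ⟨φ, hφ, fun g hg => ⟨ℓ (hg.toL1 g), ?_⟩⟩
  convert ((WeakDual.eval_continuous (hg.toL1 g)).tendsto ℓ).comp hlim using 2 with n
  simp only [Function.comp_apply, StrongDual.coe_toWeakDual]
  rw [ContinuousLinearMap.lpPairing_eq_integral]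
  refine integral_congr_ae ?_
  filter_upwards [(hfLp (φ n)).coeFn_toLp, hg.coeFn_toL1] with x h1 h2
  simp only [ContinuousLinearMap.mul_apply', h1, h2]

theorem tendsto_eLpNorm_sub_of_tendsto_ae_of_bound {α E : Type*} [MeasurableSpace α]
    [NormedAddCommGroup E] {μ : Measure α} [IsFiniteMeasure μ] {p : ℝ≥0∞} (hp : p ≠ ∞)
    {F : ℕ → α → E} {G : α → E} {C : ℝ} (hF : ∀ n, AEStronglyMeasurable (F n) μ)
    (hFC : ∀ n, ∀ᵐ x ∂μ, ‖F n x‖ ≤ C)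
    (hFG : ∀ᵐ x ∂μ, Tendsto (fun n => F n x) atTop (𝓝 (G x))) :
    Tendsto (fun n => eLpNorm (F n - G) p μ) atTop (𝓝 0) := by
  rcases eq_or_ne p 0 with rfl | hp0
  · simp
  have hpos : 0 < p.toReal := ENNReal.toReal_pos hp0 hp
  have hG : AEStronglyMeasurable G μ := aestronglyMeasurable_of_tendsto_ae _ hF hFG
  have hGC : ∀ᵐ x ∂μ, ‖G x‖ ≤ C := by
    filter_upwards [hFG, ae_all_iff.2 hFC] with x hx hxC
    exact le_of_tendsto' hx.norm hxC
  have hint : Tendsto (fun n => ∫⁻ x, ‖F n x - G x‖ₑ ^ p.toReal ∂μ) atTop (𝓝 0) := by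
    have := tendsto_lintegral_of_dominated_convergence' (μ := μ)
      (F := fun n x => ‖F n x - G x‖ₑ ^ p.toReal) (f := fun _ => 0)
      (fun _ => ENNReal.ofReal (C + C) ^ p.toReal)
      (fun n => ((hF n).sub hG).enorm.pow_const p.toReal) (fun n => ?_)
      (by simp [lintegral_const, ENNReal.mul_eq_top, ENNReal.rpow_eq_top_iff])
      ?_
    · simpa using this
    · filter_upwards [hFC n, hGC] with x h1 h2
      gcongr
      rw [← ofReal_norm]
      exact ENNReal.ofReal_le_ofReal ((norm_sub_le _ _).trans (add_le_add h1 h2))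
    · filter_upwards [hFG] with x hx
      have h0 : Tendsto (fun n => ‖F n x - G x‖ₑ) atTop (𝓝 0) := by
        simpa using (tendsto_sub_nhds_zero_iff.2 hx).enorm
      simpa [ENNReal.zero_rpow_of_pos hpos] using h0.ennrpow_const p.toReal
  simp_rw [eLpNorm_eq_lintegral_rpow_enorm_toReal hp0 hp, Pi.sub_apply]
  simpa [ENNReal.zero_rpow_of_pos (inv_pos.2 hpos)] using hint.ennrpow_const (1 / p.toReal)

section Transform

variable {X Y : Type*} [MeasurableSpace X] {ρ₁ : Measure X} {c : X → Y → ℝ} {ε : ℝ} {u : X → ℝ}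

theorem measurable_transform [MeasurableSpace Y] [SFinite ρ₁]
    (hc : Measurable (Function.uncurry c)) (hu : Measurable u) :
    Measurable (transform ρ₁ c ε u) := by
  have hm : StronglyMeasurable fun q : Y × X => exp ((u q.2 - c q.2 q.1) / ε) :=
    (((hu.comp measurable_snd).sub (hc.comp measurable_swap)).div_const ε).exp.stronglyMeasurable
  exact (hm.integral_prod_right'.measurable.log).const_mul (-ε)

variable [IsProbabilityMeasure ρ₁] {y : Y} {R M : ℝ}

theorem integral_exp_sub_div_mem_Icc (hu : Measurable u) (hcy : Measurable fun x => c x y)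
    (hR : ∀ x, |u x| ≤ R) (hM : ∀ x, |c x y| ≤ M) :
    ∫ x, exp ((u x - c x y) / ε) ∂ρ₁ ∈ Set.Icc (exp (-((R + M) / |ε|))) (exp ((R + M) / |ε|)) :=
  integral_exp_mem_Icc ((hu.sub hcy).div_const ε).aestronglyMeasurable fun x =>
    abs_div_le_div_abs_of_abs_le ((abs_sub _ _).trans (add_le_add (hR x) (hM x)))

theorem abs_transform_le (hu : Measurable u) (hcy : Measurable fun x => c x y)
    (hR : ∀ x, |u x| ≤ R) (hM : ∀ x, |c x y| ≤ M) :
    |transform ρ₁ c ε u y| ≤ |ε| * ((R + M) / |ε|) := by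
  rw [transform, abs_mul, abs_neg]
  gcongr
  exact abs_log_le_of_mem_Icc (integral_exp_sub_div_mem_Icc hu hcy hR hM)

end Transform

theorem transform_compact_operator_general
    {X Y : Type*}
    [MeasurableSpace X] [TopologicalSpace X] [PolishSpace X] [BorelSpace X]
    [MeasurableSpace Y]
    (ρ₁ : Measure X) [IsProbabilityMeasure ρ₁]
    (ρ₂ : Measure Y) [IsProbabilityMeasure ρ₂]
    (ε : ℝ)
    (c : X → Y → ℝ) (hc : Measurable (Function.uncurry c))
    (M : ℝ) (hM : ∀ x y, |c x y| ≤ M)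
    (p : ENNReal) (hp' : p ≠ ⊤)
    (R : ℝ) :
    ∀ u : ℕ → X → ℝ, (∀ n, Measurable (u n)) → (∀ n x, |u n x| ≤ R) →
      ∃ (φ : ℕ → ℕ) (g : Y → ℝ), StrictMono φ ∧
        Tendsto (fun n => eLpNorm (fun y => transform ρ₁ c ε (u (φ n)) y - g y) p ρ₂)
          atTop (nhds 0) := by
  intro u hu hR
  have hcy y : Measurable fun x => c x y := hc.comp (measurable_id.prodMk measurable_const)
  obtain ⟨φ, hφ, hlim⟩ := exists_subseq_tendsto_integral_mul (ρ := ρ₁)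
    (f := fun n x => exp (u n x / ε)) (C := exp (R / |ε|))
    (fun n => ((hu n).div_const ε).exp.aestronglyMeasurable) fun n => ae_of_all _ fun x =>
      norm_exp_le_exp_of_abs_le (abs_div_le_div_abs_of_abs_le (hR n x))
  have hL y : ∃ L, Tendsto (fun n => ∫ x, exp ((u (φ n) x - c x y) / ε) ∂ρ₁) atTop (𝓝 L) := by
    have hh := integrable_exp_of_abs_le (ρ := ρ₁) (w := fun x => -c x y / ε)
      ((hcy y).neg.div_const ε).aestronglyMeasurable fun x =>
        abs_div_le_div_abs_of_abs_le ((abs_neg _).trans_le (hM x y))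
    simpa only [← exp_add, ← add_div, ← sub_eq_add_neg] using hlim _ hh
  choose L hL using hL
  refine ⟨φ, fun y => -ε * log (L y), hφ, tendsto_eLpNorm_sub_of_tendsto_ae_of_bound hp'
    (fun n => (measurable_transform hc (hu _)).aestronglyMeasurable)
    (fun n => ae_of_all _ fun y => abs_transform_le (hu _) (hcy y) (hR _) (hM · y))
    (ae_of_all _ fun y => ?_)⟩
  have hL_mem := isClosed_Icc.mem_of_tendsto (hL y) (Eventually.of_forall fun n =>
    integral_exp_sub_div_mem_Icc (hu (φ n)) (hcy y) (hR _) (hM · y))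
  have hL_pos : 0 < L y := (exp_pos _).trans_le hL_mem.1
  exact ((continuousAt_log hL_pos.ne').tendsto.comp (hL y)).const_mul (-ε)

/-- The entropic `(c,ε)`-transform is a compact operator from `L^∞(ρ₁)` to `L^p(ρ₂)`:
the image of any bounded set of (everywhere-defined, measurable) bounded functions is
precompact in `L^p(ρ₂)`. -/
theorem transform_compact_operator
    {X Y : Type*}
    [MeasurableSpace X] [TopologicalSpace X] [PolishSpace X] [BorelSpace X]
    [MeasurableSpace Y] [TopologicalSpace Y] [PolishSpace Y] [BorelSpace Y]
    (ρ₁ : Measure X) [IsProbabilityMeasure ρ₁]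
    (ρ₂ : Measure Y) [IsProbabilityMeasure ρ₂]
    (ε : ℝ) (hε : 0 < ε)
    (c : X → Y → ℝ) (hc : Measurable (Function.uncurry c))
    (M : ℝ) (hM : ∀ x y, |c x y| ≤ M)
    (p : ENNReal) (hp : 1 ≤ p) (hp' : p ≠ ⊤)
    (R : ℝ) :
    ∀ u : ℕ → X → ℝ, (∀ n, Measurable (u n)) → (∀ n x, |u n x| ≤ R) →
      ∃ (φ : ℕ → ℕ) (g : Y → ℝ), StrictMono φ ∧
        Tendsto (fun n => eLpNorm (fun y => transform ρ₁ c ε (u (φ n)) y - g y) p ρ₂)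
          atTop (nhds 0) :=
  transform_compact_operator_general ρ₁ ρ₂ ε c hc M hM p hp' R

end
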